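/- arXiv:2405.04473 — 3 statements merged into one kernel-verified Lean document; each statement's English description precedes it below -/
import Mathlib

section
/- Let λ₀ ∈ (0,1], δ := λ₀/200, and λ₁ ∈ [λ₀/2, λ₀]. For every fixed t ∈ [0,∞), the functions r ↦ λ(t,r) and r ↦ λ♯(t,r) are differentiable on [0,∞) and their derivatives in r satisfy (λ₁/3 − δ) r⟨r⟩^{−5/3} ≤ ∂_r λ(t,r) ≤ (λ₁/3 + δ) r⟨r⟩^{−5/3} and (λ₁/3 − δ) r⟨r⟩^{−5/3} ≤ ∂_r λ♯(t,r) ≤ (λ₁/3 + δ) r⟨r⟩^{−5/3} for all r ≥ 0; in particular λ and λ♯ are nondecreasing in r. -/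
noncomputable section
def jap (r : ℝ) : ℝ := Real.sqrt (1 + r ^ 2)

lemma jap_rpow (x c : ℝ) : jap x ^ (c:ℝ) = (1 + x^2) ^ (c/2 : ℝ) := by
  have h : (0:ℝ) ≤ 1 + x^2 := by positivity
  rw [jap, Real.sqrt_eq_rpow, ← Real.rpow_mul h]
  congr 1; ring

lemma hasDerivAt_Qpow (c r : ℝ) :
    HasDerivAt (fun x : ℝ => (1 + x^2) ^ (c:ℝ)) (c * (1 + r^2) ^ (c-1:ℝ) * (2*r)) r := by
  have h1 : HasDerivAt (fun x : ℝ => 1 + x^2) (2*r) r := by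
    simpa using (hasDerivAt_pow 2 r).const_add 1
  have h2 := Real.hasDerivAt_rpow_const (x := 1 + r^2) (p := c) (Or.inl (by positivity))
  exact h2.comp r h1

lemma master (lam1 δ t ε : ℝ) (hδ0 : 0 < δ) (hδ : δ ≤ 1/200) (ht : 0 ≤ t)
    (hε : |ε| ≤ δ) (r : ℝ) (hr : 0 ≤ r) :
    ∃ L : ℝ, HasDerivAt (fun x => lam1 * jap x ^ ((1:ℝ)/3)
        + ε * (1 + t) ^ (-δ) * jap x ^ ((1:ℝ)/3)
        + ε * (1 + t * jap x ^ (-(2:ℝ)/3)) ^ (-δ) * jap x ^ ((1:ℝ)/3)) L r ∧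
      |L - lam1 / 3 * r * jap r ^ (-(5:ℝ)/3)| ≤ δ * r * jap r ^ (-(5:ℝ)/3) := by
  have hQ0 : (0:ℝ) < 1 + r^2 := by positivity
  set Q : ℝ := 1 + r^2 with hQdef
  have hQ1 : (1:ℝ) ≤ Q := by nlinarith
  set u : ℝ := 1 + t * Q ^ (-(1:ℝ)/3) with hu
  have hQn : (0:ℝ) ≤ Q ^ (-(1:ℝ)/3) := Real.rpow_nonneg hQ0.le _
  have hu1 : (1:ℝ) ≤ u := by
    have : 0 ≤ t * Q ^ (-(1:ℝ)/3) := mul_nonneg ht hQn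
    simp [hu]; linarith
  have hu0 : (0:ℝ) < u := lt_of_lt_of_le one_pos hu1
  -- derivative pieces
  have hg : HasDerivAt (fun x : ℝ => (1 + x^2) ^ ((1:ℝ)/6))
      ((1/6) * Q ^ ((1:ℝ)/6 - 1) * (2*r)) r := hasDerivAt_Qpow _ r
  have hQu : HasDerivAt (fun x : ℝ => 1 + t * (1 + x^2) ^ (-(1:ℝ)/3))
      (t * ((-(1:ℝ)/3) * Q ^ (-(1:ℝ)/3 - 1) * (2*r))) r :=
    ((hasDerivAt_Qpow (-(1:ℝ)/3) r).const_mul t).const_add 1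
  have hh : HasDerivAt (fun x : ℝ => (1 + t * (1 + x^2) ^ (-(1:ℝ)/3)) ^ (-δ))
      ((-δ) * u ^ (-δ - 1) * (t * ((-(1:ℝ)/3) * Q ^ (-(1:ℝ)/3 - 1) * (2*r)))) r := by
    have h2 := Real.hasDerivAt_rpow_const (x := u) (p := -δ) (Or.inl hu0.ne')
    exact h2.comp r hQu
  set G' : ℝ := (1/6) * Q ^ ((1:ℝ)/6 - 1) * (2*r) with hG'
  set H' : ℝ := (-δ) * u ^ (-δ - 1) * (t * ((-(1:ℝ)/3) * Q ^ (-(1:ℝ)/3 - 1) * (2*r))) with hH'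
  set a : ℝ := (1 + t) ^ (-δ) with ha
  have hF : HasDerivAt (fun x => lam1 * jap x ^ ((1:ℝ)/3)
        + ε * (1 + t) ^ (-δ) * jap x ^ ((1:ℝ)/3)
        + ε * (1 + t * jap x ^ (-(2:ℝ)/3)) ^ (-δ) * jap x ^ ((1:ℝ)/3))
      (lam1 * G' + (ε * a) * G'
        + ε * (H' * Q ^ ((1:ℝ)/6) + u ^ (-δ) * G')) r := by
    have h1 := (hg.const_mul lam1).add ((hg.const_mul (ε * a)).add
      (((hh.mul hg).const_mul ε)))
    have hfun : (fun x => lam1 * jap x ^ ((1:ℝ)/3)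
        + ε * (1 + t) ^ (-δ) * jap x ^ ((1:ℝ)/3)
        + ε * (1 + t * jap x ^ (-(2:ℝ)/3)) ^ (-δ) * jap x ^ ((1:ℝ)/3))
        = (fun x : ℝ => lam1 * (1 + x^2) ^ ((1:ℝ)/6)
          + ((ε * a) * (1 + x^2) ^ ((1:ℝ)/6)
            + ε * ((1 + t * (1 + x^2) ^ (-(1:ℝ)/3)) ^ (-δ) * (1 + x^2) ^ ((1:ℝ)/6)))) := by
      funext x
      rw [jap_rpow, jap_rpow]
      norm_num [ha]
      ring
    rw [hfun]
    convert h1 using 1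
    · rfl
    · rfl
    · rfl
    · simp only [hu, hQdef]; ring
  refine ⟨_, hF, ?_⟩
  -- bound part
  have hjap5 : jap r ^ (-(5:ℝ)/3) = Q ^ (-(5:ℝ)/6) := by rw [jap_rpow]; norm_num; rfl
  rw [hjap5]
  set X5 : ℝ := Q ^ (-(5:ℝ)/6) with hX5
  set X7 : ℝ := Q ^ (-(7:ℝ)/6) with hX7
  set C : ℝ := Q ^ ((1:ℝ)/3) with hC
  set Q16 : ℝ := Q ^ ((1:ℝ)/6) with hQ16
  have hX5n : 0 ≤ X5 := Real.rpow_nonneg hQ0.le _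
  have hX7n : 0 ≤ X7 := Real.rpow_nonneg hQ0.le _
  have hCn : 0 ≤ C := Real.rpow_nonneg hQ0.le _
  have hQ16n : 0 ≤ Q16 := Real.rpow_nonneg hQ0.le _
  have hG'eq : G' = r/3 * X5 := by
    rw [hG', hX5, show ((1:ℝ)/6 - 1) = -(5:ℝ)/6 by norm_num]; ring
  have hG'n : 0 ≤ G' := by rw [hG'eq]; positivity
  have hA : (0:ℝ) ≤ u ^ (-δ) := Real.rpow_nonneg hu0.le _
  have hA1 : u ^ (-δ) ≤ 1 := Real.rpow_le_one_of_one_le_of_nonpos hu1 (by linarith)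
  have ha0 : 0 ≤ a := Real.rpow_nonneg (by linarith) _
  have ha1 : a ≤ 1 := Real.rpow_le_one_of_one_le_of_nonpos (by linarith) (by linarith)
  have hud : u ^ (-δ - 1) = u ^ (-δ) * u⁻¹ := by
    rw [show (-δ - 1 : ℝ) = -δ + (-1) by ring, Real.rpow_add hu0, Real.rpow_neg_one]
  have hudn : 0 ≤ u ^ (-δ - 1) := Real.rpow_nonneg hu0.le _
  have hH'eq : H' = 2*δ*t*r/3 * (u ^ (-δ-1) * Q ^ (-(4:ℝ)/3)) := by
    rw [hH', show (-(1:ℝ)/3 - 1) = -(4:ℝ)/3 by norm_num]; ring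
  have hQ43n : (0:ℝ) ≤ Q ^ (-(4:ℝ)/3) := Real.rpow_nonneg hQ0.le _
  have hH'n : 0 ≤ H' := by rw [hH'eq]; positivity
  -- key inequality: 2δ t u^(-δ-1) X7 ≤ X5
  have htu : t * u⁻¹ ≤ C := by
    rw [mul_inv_le_iff₀' hu0]
    have h1 : Q ^ (-(1:ℝ)/3) * C = 1 := by
      rw [hC, ← Real.rpow_add hQ0]; norm_num
    calc t = t * (Q ^ (-(1:ℝ)/3) * C) := by rw [h1]; ring
      _ = t * Q ^ (-(1:ℝ)/3) * C := by ring
      _ ≤ C + t * Q ^ (-(1:ℝ)/3) * C := by linarith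
      _ = u * C := by rw [hu]; ring
  have hCX7 : C * X7 = X5 := by
    rw [hC, hX7, hX5, ← Real.rpow_add hQ0]; norm_num
  have key : 2*δ*t*(u ^ (-δ-1))*X7 ≤ X5 := by
    have huin : (0:ℝ) ≤ u⁻¹ := by positivity
    calc 2*δ*t*(u ^ (-δ-1))*X7 = (2*δ)*((t*u⁻¹)*X7)*(u ^ (-δ)) := by rw [hud]; ring
      _ ≤ (2*δ)*((t*u⁻¹)*X7)*1 := by
          apply mul_le_mul_of_nonneg_left hA1
          have : 0 ≤ t * u⁻¹ := mul_nonneg ht huin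
          positivity
      _ = (2*δ)*X7*(t*u⁻¹) := by ring
      _ ≤ (2*δ)*X7*C := by
          exact mul_le_mul_of_nonneg_left htu (mul_nonneg (by linarith) hX7n)
      _ = (2*δ)*X5 := by rw [← hCX7]; ring
      _ ≤ 1*X5 := mul_le_mul_of_nonneg_right (by linarith) hX5n
      _ = X5 := one_mul _
  -- H' * Q16 ≤ r/3 * X5
  have hQ716 : Q ^ (-(4:ℝ)/3) * Q16 = X7 := by
    rw [hQ16, hX7, ← Real.rpow_add hQ0]; norm_num
  have hHQ : H' * Q16 ≤ r/3 * X5 := by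
    have : H' * Q16 = r/3 * (2*δ*t*(u ^ (-δ-1))*X7) := by
      rw [hH'eq, ← hQ716]; ring
    rw [this]
    apply mul_le_mul_of_nonneg_left key (by positivity)
  have hHQn : 0 ≤ H' * Q16 := mul_nonneg hH'n hQ16n
  -- s bound
  have hs1 : a * G' ≤ G' := by
    simpa using mul_le_mul_of_nonneg_right ha1 hG'n
  have hs2 : u ^ (-δ) * G' ≤ G' := by
    simpa using mul_le_mul_of_nonneg_right hA1 hG'n
  have hsn : 0 ≤ a * G' + (H' * Q16 + u ^ (-δ) * G') := by positivity
  have hsle : a * G' + (H' * Q16 + u ^ (-δ) * G') ≤ r * X5 := by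
    rw [hG'eq] at hs1 hs2 ⊢; linarith
  have hdiff : lam1 * G' + (ε * a) * G' + ε * (H' * Q16 + u ^ (-δ) * G')
      - lam1 / 3 * r * X5 = ε * (a * G' + (H' * Q16 + u ^ (-δ) * G')) := by
    rw [hG'eq]; ring
  rw [hdiff, abs_mul, abs_of_nonneg hsn]
  calc |ε| * (a * G' + (H' * Q16 + u ^ (-δ) * G'))
      ≤ δ * (a * G' + (H' * Q16 + u ^ (-δ) * G')) := by
        apply mul_le_mul_of_nonneg_right hε hsn
    _ ≤ δ * (r * X5) := by apply mul_le_mul_of_nonneg_left hsle hδ0.le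
    _ = δ * r * X5 := by ring
lemma mono_aux {f : ℝ → ℝ} (h : ∀ r : ℝ, 0 ≤ r → ∃ L, HasDerivAt f L r ∧ 0 ≤ L) :
    MonotoneOn f (Set.Ici 0) := by
  apply monotoneOn_of_deriv_nonneg (convex_Ici 0)
  · intro x hx; exact ((h x hx).choose_spec.1).continuousAt.continuousWithinAt
  · rw [interior_Ici]; intro x hx
    exact ((h x (le_of_lt hx)).choose_spec.1).differentiableAt.differentiableWithinAt
  · rw [interior_Ici]; intro x hx
    obtain ⟨L, hL, hLn⟩ := h x (le_of_lt hx)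
    rw [hL.deriv]; exact hLn

/-- The weight exponent `λ(t,r)`. -/
def lamW (lam1 δ t r : ℝ) : ℝ :=
  lam1 * jap r ^ ((1:ℝ)/3) + δ * (1 + t) ^ (-δ) * jap r ^ ((1:ℝ)/3)
    + δ * (1 + t * jap r ^ (-(2:ℝ)/3)) ^ (-δ) * jap r ^ ((1:ℝ)/3)

/-- The weight exponent `λ♯(t,r)`. -/
def lamSharpW (lam1 δ t r : ℝ) : ℝ :=
  lam1 * jap r ^ ((1:ℝ)/3) - δ * (1 + t) ^ (-δ) * jap r ^ ((1:ℝ)/3)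
    - δ * (1 + t * jap r ^ (-(2:ℝ)/3)) ^ (-δ) * jap r ^ ((1:ℝ)/3)

theorem stmt1 (lam0 lam1 : ℝ) (h0 : 0 < lam0) (h1 : lam0 ≤ 1)
    (hl1 : lam0 / 2 ≤ lam1) (hl2 : lam1 ≤ lam0)
    (t : ℝ) (ht : 0 ≤ t) :
    (∀ r : ℝ, 0 ≤ r → ∃ L : ℝ,
      HasDerivWithinAt (fun x => lamW lam1 (lam0 / 200) t x) L (Set.Ici 0) r ∧
      (lam1 / 3 - lam0 / 200) * r * jap r ^ (-(5:ℝ)/3) ≤ L ∧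
      L ≤ (lam1 / 3 + lam0 / 200) * r * jap r ^ (-(5:ℝ)/3)) ∧
    (∀ r : ℝ, 0 ≤ r → ∃ L : ℝ,
      HasDerivWithinAt (fun x => lamSharpW lam1 (lam0 / 200) t x) L (Set.Ici 0) r ∧
      (lam1 / 3 - lam0 / 200) * r * jap r ^ (-(5:ℝ)/3) ≤ L ∧
      L ≤ (lam1 / 3 + lam0 / 200) * r * jap r ^ (-(5:ℝ)/3)) ∧
    MonotoneOn (fun x => lamW lam1 (lam0 / 200) t x) (Set.Ici 0) ∧
    MonotoneOn (fun x => lamSharpW lam1 (lam0 / 200) t x) (Set.Ici 0) := by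
  set δ : ℝ := lam0 / 200 with hδdef
  have hδ0 : 0 < δ := by positivity
  have hδ : δ ≤ 1/200 := by rw [hδdef]; linarith
  have hfW : (fun x => lamW lam1 δ t x)
      = (fun x => lam1 * jap x ^ ((1:ℝ)/3)
        + δ * (1 + t) ^ (-δ) * jap x ^ ((1:ℝ)/3)
        + δ * (1 + t * jap x ^ (-(2:ℝ)/3)) ^ (-δ) * jap x ^ ((1:ℝ)/3)) := by
    funext x; rw [lamW]
  have hfS : (fun x => lamSharpW lam1 δ t x)
      = (fun x => lam1 * jap x ^ ((1:ℝ)/3)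
        + (-δ) * (1 + t) ^ (-δ) * jap x ^ ((1:ℝ)/3)
        + (-δ) * (1 + t * jap x ^ (-(2:ℝ)/3)) ^ (-δ) * jap x ^ ((1:ℝ)/3)) := by
    funext x; rw [lamSharpW]; ring
  have hεW : |δ| ≤ δ := by rw [abs_of_nonneg hδ0.le]
  have hεS : |(-δ)| ≤ δ := by rw [abs_neg, abs_of_nonneg hδ0.le]
  have hW : ∀ r : ℝ, 0 ≤ r → ∃ L : ℝ,
      HasDerivAt (fun x => lamW lam1 δ t x) L r ∧
      |L - lam1 / 3 * r * jap r ^ (-(5:ℝ)/3)| ≤ δ * r * jap r ^ (-(5:ℝ)/3) := by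
    intro r hr
    obtain ⟨L, hL, hb⟩ := master lam1 δ t δ hδ0 hδ ht hεW r hr
    exact ⟨L, by rw [hfW]; exact hL, hb⟩
  have hS : ∀ r : ℝ, 0 ≤ r → ∃ L : ℝ,
      HasDerivAt (fun x => lamSharpW lam1 δ t x) L r ∧
      |L - lam1 / 3 * r * jap r ^ (-(5:ℝ)/3)| ≤ δ * r * jap r ^ (-(5:ℝ)/3) := by
    intro r hr
    obtain ⟨L, hL, hb⟩ := master lam1 δ t (-δ) hδ0 hδ ht hεS r hr
    exact ⟨L, by rw [hfS]; exact hL, hb⟩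
  have hlamδ : (0:ℝ) ≤ lam1 / 3 - δ := by rw [hδdef]; linarith
  have hXn : ∀ r : ℝ, (0:ℝ) ≤ jap r ^ (-(5:ℝ)/3) := by
    intro r; exact Real.rpow_nonneg (Real.sqrt_nonneg _) _
  have bnd : ∀ L r : ℝ, 0 ≤ r →
      |L - lam1 / 3 * r * jap r ^ (-(5:ℝ)/3)| ≤ δ * r * jap r ^ (-(5:ℝ)/3) →
      (lam1 / 3 - δ) * r * jap r ^ (-(5:ℝ)/3) ≤ L ∧
      L ≤ (lam1 / 3 + δ) * r * jap r ^ (-(5:ℝ)/3) := by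
    intro L r hr hb
    have h := abs_le.mp hb
    constructor <;> nlinarith [h.1, h.2]
  refine ⟨?_, ?_, ?_, ?_⟩
  · intro r hr
    obtain ⟨L, hL, hb⟩ := hW r hr
    exact ⟨L, hL.hasDerivWithinAt, (bnd L r hr hb).1, (bnd L r hr hb).2⟩
  · intro r hr
    obtain ⟨L, hL, hb⟩ := hS r hr
    exact ⟨L, hL.hasDerivWithinAt, (bnd L r hr hb).1, (bnd L r hr hb).2⟩
  · apply mono_aux
    intro r hr
    obtain ⟨L, hL, hb⟩ := hW r hr
    refine ⟨L, hL, ?_⟩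
    have h2 : 0 ≤ (lam1 / 3 - δ) * r * jap r ^ (-(5:ℝ)/3) :=
      mul_nonneg (mul_nonneg hlamδ hr) (hXn r)
    linarith [(bnd L r hr hb).1]
  · apply mono_aux
    intro r hr
    obtain ⟨L, hL, hb⟩ := hS r hr
    refine ⟨L, hL, ?_⟩
    have h2 : 0 ≤ (lam1 / 3 - δ) * r * jap r ^ (-(5:ℝ)/3) :=
      mul_nonneg (mul_nonneg hlamδ hr) (hXn r)
    linarith [(bnd L r hr hb).1]
end
end

section
/- Let λ₀ ∈ (0,1], δ := λ₀/200, and λ₁ ∈ [λ₀/2, λ₀]. For all t, y, b ∈ [0,∞) with b ≤ y one has λ(t, y+b) ≤ λ(t,y) + λ(t,b) − (λ₁/4)⟨b⟩^{1/3}. -/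
noncomputable section

lemma jap_pos (r : ℝ) : 0 < jap r := Real.sqrt_pos.mpr (by positivity)

lemma one_le_jap (r : ℝ) : 1 ≤ jap r := by
  rw [show (1:ℝ) = Real.sqrt 1 by simp [Real.sqrt_one]]
  exact Real.sqrt_le_sqrt (by nlinarith [sq_nonneg r])

lemma le_jap (r : ℝ) : r ≤ jap r := by
  have h := Real.sq_sqrt (show (0:ℝ) ≤ 1 + r ^ 2 by positivity)
  have h2 := Real.sqrt_nonneg (1 + r ^ 2)
  unfold jap
  nlinarith

lemma jap_mono {a c : ℝ} (ha : 0 ≤ a) (hac : a ≤ c) : jap a ≤ jap c :=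
  Real.sqrt_le_sqrt (by nlinarith)

lemma jap_add_le (y : ℝ) {b : ℝ} (hb : 0 ≤ b) : jap (y + b) ≤ jap y + b := by
  have hy := le_jap y
  have hj := (jap_pos y).le
  have : jap (y + b) ≤ Real.sqrt ((jap y + b) ^ 2) := by
    apply Real.sqrt_le_sqrt
    have h := Real.sq_sqrt (show (0:ℝ) ≤ 1 + y ^ 2 by positivity)
    unfold jap at *
    nlinarith
  rwa [Real.sqrt_sq (by linarith)] at this

/-- cube root of a cube -/
lemma cube_rpow (x : ℝ) (hx : 0 ≤ x) : (x ^ (3:ℕ)) ^ ((1:ℝ)/3) = x := by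
  rw [← Real.rpow_natCast x 3, ← Real.rpow_mul hx]
  norm_num

/-- `(A+B)^(1/3) ≤ A^(1/3) + (1/3) B^(1/3)` when `0 ≤ B ≤ A`. -/
lemma cbrt_add_le {A B : ℝ} (hA : 0 < A) (hB : 0 ≤ B) (hBA : B ≤ A) :
    (A + B) ^ ((1:ℝ)/3) ≤ A ^ ((1:ℝ)/3) + (1/3) * B ^ ((1:ℝ)/3) := by
  set a := A ^ ((1:ℝ)/3) with ha
  set c := B ^ ((1:ℝ)/3) with hc
  have ha0 : 0 ≤ a := Real.rpow_nonneg hA.le _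
  have hc0 : 0 ≤ c := Real.rpow_nonneg hB _
  have hca : c ≤ a := Real.rpow_le_rpow hB hBA (by norm_num)
  have haA : a ^ (3:ℕ) = A := by
    rw [ha, ← Real.rpow_natCast (A ^ ((1:ℝ)/3)) 3, ← Real.rpow_mul hA.le]; norm_num
  have hcB : c ^ (3:ℕ) = B := by
    rw [hc, ← Real.rpow_natCast (B ^ ((1:ℝ)/3)) 3, ← Real.rpow_mul hB]; norm_num
  have key : A + B ≤ (a + (1/3) * c) ^ (3:ℕ) := by
    rw [← haA, ← hcB]; nlinarith [sq_nonneg a, sq_nonneg c, mul_nonneg ha0 hc0]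
  calc (A + B) ^ ((1:ℝ)/3) ≤ ((a + (1/3) * c) ^ (3:ℕ)) ^ ((1:ℝ)/3) :=
        Real.rpow_le_rpow (by positivity) key (by norm_num)
    _ = a + (1/3) * c := cube_rpow _ (by positivity)

/-- `b ⟨y⟩^{-2/3} ≤ ⟨b⟩^{1/3}` for `0 ≤ b ≤ y`. -/
lemma b_mul_le {y b : ℝ} (hb : 0 ≤ b) (hby : b ≤ y) :
    b * jap y ^ (-(2:ℝ)/3) ≤ jap b ^ ((1:ℝ)/3) := by
  have h1 : jap y ^ (-(2:ℝ)/3) ≤ jap b ^ (-(2:ℝ)/3) :=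
    Real.rpow_le_rpow_of_nonpos (jap_pos b) (jap_mono hb hby) (by norm_num)
  have h2 : b * jap y ^ (-(2:ℝ)/3) ≤ jap b * jap b ^ (-(2:ℝ)/3) := by
    apply mul_le_mul (le_jap b) h1 (Real.rpow_nonneg (jap_pos y).le _) (jap_pos b).le
  calc b * jap y ^ (-(2:ℝ)/3) ≤ jap b * jap b ^ (-(2:ℝ)/3) := h2
    _ = jap b ^ (1:ℝ) * jap b ^ (-(2:ℝ)/3) := by rw [Real.rpow_one]
    _ = jap b ^ ((1:ℝ) + -(2:ℝ)/3) := (Real.rpow_add (jap_pos b) _ _).symm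
    _ = jap b ^ ((1:ℝ)/3) := by norm_num

lemma g_diff {t y b δ : ℝ} (ht : 0 ≤ t) (hb : 0 ≤ b) (hby : b ≤ y)
    (hδ0 : 0 ≤ δ) (hδ1 : δ ≤ 1) :
    (1 + t * jap (y + b) ^ (-(2:ℝ)/3)) ^ (-δ) * jap y ^ ((1:ℝ)/3)
      ≤ (1 + t * jap y ^ (-(2:ℝ)/3)) ^ (-δ) * jap y ^ ((1:ℝ)/3)
        + (2 * δ / 3) * jap b ^ ((1:ℝ)/3) := by
  have hy0 : 0 ≤ y := hb.trans hby
  have hJy := jap_pos y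
  have hJs := jap_pos (y + b)
  set q : ℝ := b * (jap y)⁻¹ with hq
  have hq0 : 0 ≤ q := mul_nonneg hb (inv_nonneg.mpr hJy.le)
  -- C1 : ⟨y+b⟩^{2/3} ≤ ⟨y⟩^{2/3} * (1 + (2/3) q)
  have hsplit : jap y + b = jap y * (1 + q) := by
    rw [hq, mul_add, mul_one, mul_comm b, ← mul_assoc, mul_inv_cancel₀ hJy.ne', one_mul]
  have hC1 : jap (y + b) ^ ((2:ℝ)/3) ≤ jap y ^ ((2:ℝ)/3) * (1 + (2/3) * q) := by
    calc jap (y + b) ^ ((2:ℝ)/3) ≤ (jap y * (1 + q)) ^ ((2:ℝ)/3) := by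
          rw [← hsplit]; exact Real.rpow_le_rpow hJs.le (jap_add_le y hb) (by norm_num)
      _ = jap y ^ ((2:ℝ)/3) * (1 + q) ^ ((2:ℝ)/3) :=
          Real.mul_rpow hJy.le (by linarith)
      _ ≤ jap y ^ ((2:ℝ)/3) * (1 + (2/3) * q) := by
          apply mul_le_mul_of_nonneg_left _ (Real.rpow_nonneg hJy.le _)
          exact rpow_one_add_le_one_add_mul_self (by linarith) (by norm_num) (by norm_num)
  set w : ℝ := (2/3) * q with hw
  have hw0 : 0 ≤ w := by positivity
  set Py : ℝ := jap y ^ ((2:ℝ)/3) with hPy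
  set Ps : ℝ := jap (y + b) ^ ((2:ℝ)/3) with hPs
  have hPy0 : 0 < Py := Real.rpow_pos_of_pos hJy _
  have hPs0 : 0 < Ps := Real.rpow_pos_of_pos hJs _
  -- s ≤ s' (1 + w)
  have hinv_y : jap y ^ (-(2:ℝ)/3) = Py⁻¹ := by
    rw [hPy, ← Real.rpow_neg hJy.le]; norm_num
  have hinv_s : jap (y + b) ^ (-(2:ℝ)/3) = Ps⁻¹ := by
    rw [hPs, ← Real.rpow_neg hJs.le]; norm_num
  have hss : Py⁻¹ ≤ Ps⁻¹ * (1 + w) := by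
    rw [inv_le_iff_one_le_mul₀' hPy0]
    calc (1:ℝ) = Ps⁻¹ * Ps := (inv_mul_cancel₀ hPs0.ne').symm
      _ ≤ Ps⁻¹ * (Py * (1 + w)) :=
          mul_le_mul_of_nonneg_left hC1 (inv_nonneg.mpr hPs0.le)
      _ = Py * (Ps⁻¹ * (1 + w)) := by ring
  set u : ℝ := 1 + t * jap y ^ (-(2:ℝ)/3) with hu
  set v : ℝ := 1 + t * jap (y + b) ^ (-(2:ℝ)/3) with hv
  have hu1 : 1 ≤ u := by
    rw [hu]; linarith [mul_nonneg ht (Real.rpow_nonneg hJy.le (-(2:ℝ)/3))]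
  have hv1 : 1 ≤ v := by
    rw [hv]; linarith [mul_nonneg ht (Real.rpow_nonneg hJs.le (-(2:ℝ)/3))]
  have huv : u ≤ v * (1 + w) := by
    rw [hu, hv, hinv_y, hinv_s]
    have h1 : t * Py⁻¹ ≤ t * (Ps⁻¹ * (1 + w)) := mul_le_mul_of_nonneg_left hss ht
    have h2 : 0 ≤ t * Ps⁻¹ := mul_nonneg ht (inv_nonneg.mpr hPs0.le)
    nlinarith [mul_nonneg h2 hw0]
  -- rpow step
  have hδpow : u ^ δ ≤ v ^ δ * (1 + w) ^ δ := by
    calc u ^ δ ≤ (v * (1 + w)) ^ δ := Real.rpow_le_rpow (by linarith) huv hδ0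
      _ = v ^ δ * (1 + w) ^ δ := Real.mul_rpow (by linarith) (by linarith)
  have hupos : 0 < u ^ δ := Real.rpow_pos_of_pos (by linarith) _
  have hvpos : 0 < v ^ δ := Real.rpow_pos_of_pos (by linarith) _
  have hu1' : 1 ≤ u ^ δ := Real.one_le_rpow hu1 hδ0
  have hbern : (1 + w) ^ δ ≤ 1 + δ * w :=
    rpow_one_add_le_one_add_mul_self (by linarith) hδ0 hδ1
  have hkey : (v ^ δ)⁻¹ ≤ (u ^ δ)⁻¹ + δ * w := by
    have h3 : (v ^ δ)⁻¹ * u ^ δ ≤ (1 + w) ^ δ := by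
      rw [inv_mul_le_iff₀ hvpos]; linarith [hδpow]
    have h4 : (v ^ δ)⁻¹ = (u ^ δ)⁻¹ * ((v ^ δ)⁻¹ * u ^ δ) := by
      field_simp
    have h5 : (u ^ δ)⁻¹ ≤ 1 := by
      rw [inv_le_one_iff₀]; right; exact hu1'
    have h6 : 0 < (u ^ δ)⁻¹ := by positivity
    calc (v ^ δ)⁻¹ = (u ^ δ)⁻¹ * ((v ^ δ)⁻¹ * u ^ δ) := h4
      _ ≤ (u ^ δ)⁻¹ * (1 + δ * w) := by
          apply mul_le_mul_of_nonneg_left _ h6.le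
          linarith [h3, hbern]
      _ = (u ^ δ)⁻¹ + (u ^ δ)⁻¹ * (δ * w) := by ring
      _ ≤ (u ^ δ)⁻¹ + δ * w := by
          have : (u ^ δ)⁻¹ * (δ * w) ≤ 1 * (δ * w) :=
            mul_le_mul_of_nonneg_right h5 (by positivity)
          linarith
  -- convert back to rpow (-δ)
  have hgneg_u : u ^ (-δ) = (u ^ δ)⁻¹ := Real.rpow_neg (by linarith) δ
  have hgneg_v : v ^ (-δ) = (v ^ δ)⁻¹ := Real.rpow_neg (by linarith) δ
  have hfin : v ^ (-δ) ≤ u ^ (-δ) + δ * w := by rw [hgneg_u, hgneg_v]; exact hkey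
  -- multiply by Jy^{1/3}
  have hJy13 : 0 < jap y ^ ((1:ℝ)/3) := Real.rpow_pos_of_pos hJy _
  have hmul : v ^ (-δ) * jap y ^ ((1:ℝ)/3)
      ≤ u ^ (-δ) * jap y ^ ((1:ℝ)/3) + (δ * w) * jap y ^ ((1:ℝ)/3) := by
    calc v ^ (-δ) * jap y ^ ((1:ℝ)/3)
        ≤ (u ^ (-δ) + δ * w) * jap y ^ ((1:ℝ)/3) :=
          mul_le_mul_of_nonneg_right hfin hJy13.le
      _ = u ^ (-δ) * jap y ^ ((1:ℝ)/3) + (δ * w) * jap y ^ ((1:ℝ)/3) := by ring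
  have hwJ : w * jap y ^ ((1:ℝ)/3) = (2/3) * (b * jap y ^ (-(2:ℝ)/3)) := by
    rw [hw, hq]
    have : (jap y)⁻¹ * jap y ^ ((1:ℝ)/3) = jap y ^ (-(2:ℝ)/3) := by
      rw [← Real.rpow_neg_one (jap y), ← Real.rpow_add hJy]; norm_num
    calc (2/3) * (b * (jap y)⁻¹) * jap y ^ ((1:ℝ)/3)
        = (2/3) * (b * ((jap y)⁻¹ * jap y ^ ((1:ℝ)/3))) := by ring
      _ = (2/3) * (b * jap y ^ (-(2:ℝ)/3)) := by rw [this]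
  have hfinal : (δ * w) * jap y ^ ((1:ℝ)/3) ≤ (2 * δ / 3) * jap b ^ ((1:ℝ)/3) := by
    have h8 := b_mul_le hb hby
    have h9 : (δ * w) * jap y ^ ((1:ℝ)/3) = (2 * δ / 3) * (b * jap y ^ (-(2:ℝ)/3)) := by
      rw [mul_assoc, hwJ]; ring
    rw [h9]
    exact mul_le_mul_of_nonneg_left h8 (by linarith)
  calc v ^ (-δ) * jap y ^ ((1:ℝ)/3)
      ≤ u ^ (-δ) * jap y ^ ((1:ℝ)/3) + (δ * w) * jap y ^ ((1:ℝ)/3) := hmul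
    _ ≤ u ^ (-δ) * jap y ^ ((1:ℝ)/3) + (2 * δ / 3) * jap b ^ ((1:ℝ)/3) := by linarith


set_option maxHeartbeats 1000000 in
theorem stmt3 (lam0 lam1 : ℝ) (h0 : 0 < lam0) (h1 : lam0 ≤ 1)
    (hl1 : lam0 / 2 ≤ lam1) (hl2 : lam1 ≤ lam0)
    (t y b : ℝ) (ht : 0 ≤ t) (hb : 0 ≤ b) (hby : b ≤ y) :
    lamW lam1 (lam0 / 200) t (y + b) ≤
      lamW lam1 (lam0 / 200) t y + lamW lam1 (lam0 / 200) t b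
        - (lam1 / 4) * jap b ^ ((1:ℝ)/3) := by
  have hy0 : 0 ≤ y := hb.trans hby
  set d : ℝ := lam0 / 200 with hd
  have hd0 : 0 ≤ d := by rw [hd]; linarith
  have hd1 : d ≤ 1 / 200 := by rw [hd]; linarith
  have hdl : d ≤ lam1 / 100 := by rw [hd]; linarith
  have hlam1 : 0 < lam1 := by linarith
  have hJb1 : 1 ≤ jap b ^ ((1:ℝ)/3) := by
    calc (1:ℝ) = 1 ^ ((1:ℝ)/3) := (Real.one_rpow _).symm
      _ ≤ jap b ^ ((1:ℝ)/3) := Real.rpow_le_rpow zero_le_one (one_le_jap b) (by norm_num)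
  have hJb0 : 0 ≤ jap b ^ ((1:ℝ)/3) := by linarith
  have hJy0 : 0 ≤ jap y ^ ((1:ℝ)/3) := (Real.rpow_pos_of_pos (jap_pos y) _).le
  -- F1 : subadditivity with gain
  have hbJy : b ≤ jap y := hby.trans (le_jap y)
  have F1 : jap (y + b) ^ ((1:ℝ)/3)
      ≤ jap y ^ ((1:ℝ)/3) + (1/3) * jap b ^ ((1:ℝ)/3) := by
    have h1 : jap (y + b) ^ ((1:ℝ)/3) ≤ (jap y + b) ^ ((1:ℝ)/3) :=
      Real.rpow_le_rpow (jap_pos _).le (jap_add_le y hb) (by norm_num)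
    have h2 := cbrt_add_le (jap_pos y) hb hbJy
    have h3 : b ^ ((1:ℝ)/3) ≤ jap b ^ ((1:ℝ)/3) :=
      Real.rpow_le_rpow hb (le_jap b) (by norm_num)
    nlinarith
  have F4 := g_diff (δ := d) ht hb hby hd0 (by linarith)
  -- bounds on the various factors
  have hc1 : (1 + t) ^ (-d) ≤ 1 :=
    Real.rpow_le_one_of_one_le_of_nonpos (by linarith) (by linarith)
  have hc0 : 0 ≤ (1 + t) ^ (-d) := (Real.rpow_pos_of_pos (by linarith) _).le
  have hbase_s : (0:ℝ) < 1 + t * jap (y + b) ^ (-(2:ℝ)/3) := by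
    have := mul_nonneg ht (Real.rpow_nonneg (jap_pos (y + b)).le (-(2:ℝ)/3)); linarith
  have hbase_s1 : (1:ℝ) ≤ 1 + t * jap (y + b) ^ (-(2:ℝ)/3) := by
    have := mul_nonneg ht (Real.rpow_nonneg (jap_pos (y + b)).le (-(2:ℝ)/3)); linarith
  have hgs1 : (1 + t * jap (y + b) ^ (-(2:ℝ)/3)) ^ (-d) ≤ 1 :=
    Real.rpow_le_one_of_one_le_of_nonpos hbase_s1 (by linarith)
  have hgs0 : 0 ≤ (1 + t * jap (y + b) ^ (-(2:ℝ)/3)) ^ (-d) :=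
    (Real.rpow_pos_of_pos hbase_s _).le
  have hbase_b : (0:ℝ) < 1 + t * jap b ^ (-(2:ℝ)/3) := by
    have := mul_nonneg ht (Real.rpow_nonneg (jap_pos b).le (-(2:ℝ)/3)); linarith
  have hgb0 : 0 ≤ (1 + t * jap b ^ (-(2:ℝ)/3)) ^ (-d) :=
    (Real.rpow_pos_of_pos hbase_b _).le
  unfold lamW
  set Js : ℝ := jap (y + b) ^ ((1:ℝ)/3) with hJs
  set Jy : ℝ := jap y ^ ((1:ℝ)/3) with hJy
  set Jb : ℝ := jap b ^ ((1:ℝ)/3) with hJb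
  set c : ℝ := (1 + t) ^ (-d) with hc
  set gs : ℝ := (1 + t * jap (y + b) ^ (-(2:ℝ)/3)) ^ (-d) with hgs
  set gy : ℝ := (1 + t * jap y ^ (-(2:ℝ)/3)) ^ (-d) with hgy
  set gb : ℝ := (1 + t * jap b ^ (-(2:ℝ)/3)) ^ (-d) with hgb
  clear_value Js Jy Jb c gs gy gb
  clear_value d
  -- F4 : gs * Jy ≤ gy * Jy + (2*d/3) * Jb
  have hcoef : (lam1 + d * c) / 3 + 2 * d ^ 2 / 3 + d / 3 ≤ 3 * lam1 / 4 + d * c := by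
    have hdc : 0 ≤ d * c := mul_nonneg hd0 hc0
    have hdc' : d * c ≤ d := by
      have := mul_le_mul_of_nonneg_left hc1 hd0; linarith
    nlinarith
  have S1 : (lam1 + d * c) * Js ≤ (lam1 + d * c) * (Jy + (1/3) * Jb) :=
    mul_le_mul_of_nonneg_left F1 (by positivity)
  have S2 : gs * Js ≤ gs * Jy + (1/3) * Jb := by
    have h1 : gs * Js ≤ gs * (Jy + (1/3) * Jb) := mul_le_mul_of_nonneg_left F1 hgs0
    have h2 : gs * ((1/3) * Jb) ≤ 1 * ((1/3) * Jb) :=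
      mul_le_mul_of_nonneg_right hgs1 (by linarith)
    nlinarith
  have S3 : d * (gs * Js) ≤ d * (gy * Jy + (2 * d / 3) * Jb + (1/3) * Jb) := by
    apply mul_le_mul_of_nonneg_left _ hd0
    linarith [F4, S2]
  have H := mul_le_mul_of_nonneg_right hcoef hJb0
  have H2 : 0 ≤ d * gb * Jb := mul_nonneg (mul_nonneg hd0 hgb0) hJb0
  nlinarith [S1, S3, H, H2]
end
end

section
/- Let d ≥ 1, λ₀ ∈ (0,1], δ := λ₀/200, and λ₁ ∈ [λ₀/2, 0.9λ₀]. For all real numbers 0 ≤ s ≤ t and all k ∈ ℤ^d \ {0} one has A(t,k,tk)/A(s,k,tk) ≤ exp( −δ² |t−s| |k|^{1/3} (1+t)^{−2/3−δ} / 2 ). -/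
noncomputable section

/-- `⟨k,ξ⟩ = (1+|k|²+|ξ|²)^(1/2)`. -/
def brk2 {d : ℕ} (k ξ : EuclideanSpace ℝ (Fin d)) : ℝ := Real.sqrt (1 + ‖k‖ ^ 2 + ‖ξ‖ ^ 2)

/-- `|(k,ξ)|`, the Euclidean norm of `(k,ξ) ∈ ℝ^{2d}`. -/
def nrm2 {d : ℕ} (k ξ : EuclideanSpace ℝ (Fin d)) : ℝ := Real.sqrt (‖k‖ ^ 2 + ‖ξ‖ ^ 2)

/-- The weight `A(t,k,ξ) = exp(λ(t,|(k,ξ)|))`. -/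
def Aw {d : ℕ} (lam1 δ t : ℝ) (k ξ : EuclideanSpace ℝ (Fin d)) : ℝ :=
  Real.exp (lamW lam1 δ t (nrm2 k ξ))

/-- The weight `A♯(t,k,ξ) = exp(λ♯(t,|(k,ξ)|))`. -/
def AwSharp {d : ℕ} (lam1 δ t : ℝ) (k ξ : EuclideanSpace ℝ (Fin d)) : ℝ :=
  Real.exp (lamSharpW lam1 δ t (nrm2 k ξ))

/-- The lattice vector `k ∈ ℤ^d` viewed as a point of `ℝ^d`. -/
def latc {d : ℕ} (k : Fin d → ℤ) : EuclideanSpace ℝ (Fin d) :=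
  (WithLp.equiv 2 (Fin d → ℝ)).symm fun i => (k i : ℝ)

lemma key1 (δ s t : ℝ) (hδ : 0 < δ) (hs : 0 ≤ s) (hst : s ≤ t) :
    (1+t) ^ (-δ) - (1+s) ^ (-δ) ≤ -(δ * (t-s) * (1+t) ^ (-1-δ)) := by
  have ht : 0 ≤ t := hs.trans hst
  have hder : ∀ x : ℝ, 0 < 1 + x →
      HasDerivAt (fun y => -((1+y) ^ (-δ))) (δ * (1+x) ^ (-δ-1)) x := by
    intro x hx
    have h1 : HasDerivAt (fun y : ℝ => 1 + y) 1 x := (hasDerivAt_id x).const_add 1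
    have h2 : HasDerivAt (fun y : ℝ => (1+y) ^ (-δ)) (-δ * (1+x) ^ (-δ-1) * 1) x :=
      (Real.hasDerivAt_rpow_const (p := -δ) (Or.inl hx.ne')).comp x h1
    have : HasDerivAt (fun y => -((1+y) ^ (-δ))) (-(-δ * (1+x) ^ (-δ-1) * 1)) x := h2.neg
    convert this using 1
    ring
  have key := Convex.mul_sub_le_image_sub_of_le_deriv (convex_Icc s t)
      (f := fun x => -((1+x) ^ (-δ))) (C := δ * (1+t) ^ (-1-δ))
      ?_ ?_ ?_ s (Set.left_mem_Icc.mpr hst) t (Set.right_mem_Icc.mpr hst) hst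
  · have h2 : -(δ * (t-s) * (1+t)^(-1-δ)) = -((δ * (1+t)^(-1-δ)) * (t-s)) := by ring
    rw [h2]
    linarith [key]
  · apply ContinuousOn.neg
    apply ContinuousOn.rpow_const (by fun_prop)
    intro x hx
    exact Or.inl (by nlinarith [hx.1] : (1:ℝ)+x ≠ 0)
  · intro x hx
    rw [interior_Icc] at hx
    have hx0 : 0 < 1 + x := by nlinarith [hx.1]
    exact (hder x hx0).differentiableAt.differentiableWithinAt
  · intro x hx
    rw [interior_Icc] at hx
    have hx0 : 0 < 1 + x := by nlinarith [hx.1]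
    rw [(hder x hx0).deriv]
    have hle : (1+t) ^ (-δ-1) ≤ (1+x) ^ (-δ-1) :=
      Real.rpow_le_rpow_of_nonpos hx0 (by linarith [hx.2]) (by linarith)
    have h3 : (-1-δ : ℝ) = -δ-1 := by ring
    rw [h3]
    exact mul_le_mul_of_nonneg_left hle hδ.le

set_option maxHeartbeats 1000000 in
theorem stmt8 (d : ℕ) (hd : 1 ≤ d) (lam0 lam1 : ℝ)
    (h0 : 0 < lam0) (h1 : lam0 ≤ 1)
    (hl1 : lam0 / 2 ≤ lam1) (hl2 : lam1 ≤ 0.9 * lam0)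
    (s t : ℝ) (hs : 0 ≤ s) (hst : s ≤ t) (k : Fin d → ℤ) (hk : k ≠ 0) :
    Aw lam1 (lam0 / 200) t (latc k) (t • latc k) /
        Aw lam1 (lam0 / 200) s (latc k) (t • latc k) ≤
      Real.exp (-(lam0 / 200) ^ 2 * |t - s| * ‖latc k‖ ^ ((1:ℝ)/3) *
        (1 + t) ^ (-(2:ℝ)/3 - lam0 / 200) / 2) := by
  set δ := lam0 / 200 with hδdef
  have hδ : 0 < δ := by positivity
  have ht0 : 0 ≤ t := hs.trans hst
  have ht1 : (0:ℝ) < 1 + t := by linarith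
  set K := ‖latc k‖ with hKdef
  have hK0 : 0 ≤ K := norm_nonneg _
  set r := nrm2 (latc k) (t • latc k) with hrdef
  set J := jap r with hJdef
  have hJeq : J = Real.sqrt (1 + K ^ 2 * (1 + t ^ 2)) := by
    rw [hJdef, hrdef]
    unfold jap nrm2
    rw [Real.sq_sqrt (by positivity)]
    rw [norm_smul, Real.norm_eq_abs, abs_of_nonneg ht0]
    congr 1
    ring
  have hJpos : 0 < J := by
    rw [hJeq]
    exact Real.sqrt_pos.mpr (by positivity)
  have hJge : K * (1 + t) / 8 ≤ J := by
    rw [hJeq]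
    have h8 : (K * (1+t)/8)^2 ≤ 1 + K^2*(1+t^2) := by
      nlinarith [sq_nonneg (K*(1-t)), sq_nonneg K, sq_nonneg (K*t)]
    calc K*(1+t)/8 = Real.sqrt ((K*(1+t)/8)^2) := (Real.sqrt_sq (by positivity)).symm
      _ ≤ _ := Real.sqrt_le_sqrt h8
  -- cube root comparison
  have hxJ : K ^ ((1:ℝ)/3) * (1+t) ^ ((1:ℝ)/3) / 2 ≤ J ^ ((1:ℝ)/3) := by
    have hx0 : (0:ℝ) ≤ K ^ ((1:ℝ)/3) * (1+t)^((1:ℝ)/3)/2 := by positivity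
    have hx3 : (K ^ ((1:ℝ)/3) * (1+t) ^ ((1:ℝ)/3) / 2) ^ (3:ℕ) = K * (1+t) / 8 := by
      rw [div_pow, mul_pow, ← Real.rpow_natCast (K ^ ((1:ℝ)/3)) 3,
        ← Real.rpow_natCast ((1+t) ^ ((1:ℝ)/3)) 3, ← Real.rpow_mul hK0,
        ← Real.rpow_mul ht1.le]
      norm_num
    have h1 : (K ^ ((1:ℝ)/3) * (1+t) ^ ((1:ℝ)/3) / 2) ^ (3:ℕ) ≤ J := hx3 ▸ hJge
    have h2 := Real.rpow_le_rpow (by positivity) h1 (by norm_num : (0:ℝ) ≤ 1/3)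
    calc K ^ ((1:ℝ)/3) * (1+t) ^ ((1:ℝ)/3) / 2
        = ((K ^ ((1:ℝ)/3) * (1+t) ^ ((1:ℝ)/3) / 2) ^ (3:ℕ)) ^ ((1:ℝ)/3) := by
          rw [← Real.rpow_natCast _ 3, ← Real.rpow_mul hx0]
          norm_num
      _ ≤ J ^ ((1:ℝ)/3) := h2
  -- reduce to exponent inequality
  unfold Aw
  rw [← hrdef, ← Real.exp_sub, Real.exp_le_exp,
    abs_of_nonneg (by linarith : (0:ℝ) ≤ t-s)]
  unfold lamW
  rw [← hJdef]
  set J13 := J ^ ((1:ℝ)/3) with hJ13def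
  set c := J ^ (-(2:ℝ)/3) with hcdef
  have hJ13 : 0 ≤ J13 := Real.rpow_nonneg hJpos.le _
  have hc : 0 < c := Real.rpow_pos_of_pos hJpos _
  set A1 := (1+t) ^ (-δ) with hA1
  set A2 := (1+s) ^ (-δ) with hA2
  set B1 := (1+t*c) ^ (-δ) with hB1
  set B2 := (1+s*c) ^ (-δ) with hB2
  have h5 : δ*J13*(A1-A2) ≤ δ*J13*(-(δ*(t-s)*(1+t)^(-1-δ))) :=
    mul_le_mul_of_nonneg_left (key1 δ s t hδ hs hst) (by positivity)
  have hB : B1 ≤ B2 := by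
    rw [hB1, hB2]
    exact Real.rpow_le_rpow_of_nonpos (by nlinarith [mul_nonneg hs hc.le])
      (by nlinarith [mul_le_mul_of_nonneg_right hst hc.le]) (by linarith)
  have h6 : δ*J13*(B1-B2) ≤ 0 :=
    mul_nonpos_of_nonneg_of_nonpos (by positivity) (by linarith)
  have hmain : K ^ ((1:ℝ)/3) * (1+t)^(-(2:ℝ)/3-δ)/2 ≤ J13 * (1+t)^(-1-δ) := by
    have hsplit : (1+t:ℝ)^(-1-δ) = (1+t)^(-(2:ℝ)/3-δ) * (1+t)^(-(1:ℝ)/3) := by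
      rw [← Real.rpow_add ht1]
      congr 1
      ring
    rw [hsplit]
    have hpos3 : (0:ℝ) < (1+t)^(-(1:ℝ)/3) := Real.rpow_pos_of_pos ht1 _
    have hmul := mul_le_mul_of_nonneg_right hxJ hpos3.le
    have hcanc : (1+t:ℝ)^((1:ℝ)/3) * (1+t)^(-(1:ℝ)/3) = 1 := by
      rw [← Real.rpow_add ht1]
      norm_num
    calc K ^ ((1:ℝ)/3) * (1+t)^(-(2:ℝ)/3-δ)/2
        = K ^ ((1:ℝ)/3) * ((1+t)^((1:ℝ)/3) * (1+t)^(-(1:ℝ)/3)) * (1+t)^(-(2:ℝ)/3-δ)/2 := by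
          rw [hcanc]; ring
      _ = (K ^ ((1:ℝ)/3) * (1+t)^((1:ℝ)/3)/2 * (1+t)^(-(1:ℝ)/3)) * (1+t)^(-(2:ℝ)/3-δ) := by
          ring
      _ ≤ (J13 * (1+t)^(-(1:ℝ)/3)) * (1+t)^(-(2:ℝ)/3-δ) := by
          apply mul_le_mul_of_nonneg_right hmul (Real.rpow_nonneg ht1.le _)
      _ = J13 * ((1+t)^(-(2:ℝ)/3-δ) * (1+t)^(-(1:ℝ)/3)) := by ring
  have h7 : δ^2*(t-s)*(K ^ ((1:ℝ)/3)*(1+t)^(-(2:ℝ)/3-δ)/2) ≤ δ^2*(t-s)*(J13*(1+t)^(-1-δ)) :=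
    mul_le_mul_of_nonneg_left hmain (mul_nonneg (by positivity) (by linarith))
  nlinarith [h5, h6, h7]
end
end
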